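/- arXiv:1612.06609 — 2 statements merged into one kernel-verified Lean document; each statement's English description precedes it below -/
import Mathlib

section
/- Let p be a prime, n a positive integer, and k a divisor of p^n − 1 such that k is even if p is odd. Then the generalised Paley graph GPaley(p^n, k) is arc-transitive: for any vertices x, y, x', y' with x adjacent to y and x' adjacent to y', there is an automorphism of GPaley(p^n, k) mapping x to x' and y to y'. -/
/-!
Adjacency in `GPaley(q, k)` says that `x - y` lies in the subgroup `H ≤ GF(q)ˣ` of
`d`-th powers up to sign. For `a ∈ H` and any `b` the affine map `t ↦ a * t + b` is therefore an
automorphism, and these maps act transitively on arcs: the arc `(x, y)` is sent to `(x', y')` by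
`t ↦ a * (t - x) + x'` with `a = (x' - y') / (x - y)`.
-/

/-- `k` is a primitive divisor of `p ^ n - 1`:  `k` divides `p ^ n - 1`
but `k` does not divide `p ^ a - 1` for any `1 ≤ a < n`. -/
def IsPrimitiveDivisor (p n k : ℕ) : Prop :=
  k ∣ p ^ n - 1 ∧ ∀ a : ℕ, 1 ≤ a → a < n → ¬ k ∣ p ^ a - 1

/-- The generalised Paley graph `GPaley(p^n, k)`: vertices are the elements of
`GF(p^n)`, and distinct `x, y` are adjacent iff `x - y` is a `d`-th power in
`GF(p^n)^*`, where `d = (p^n - 1)/k`.  (Under the standing hypothesis that `k`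
is even when `p` is odd, the underlying relation is symmetric, so taking the
symmetrised relation via `fromRel` yields exactly this graph.) -/
def gpaley (p : ℕ) [Fact p.Prime] (n k : ℕ) : SimpleGraph (GaloisField p n) :=
  SimpleGraph.fromRel fun x y =>
    ∃ z : GaloisField p n, z ≠ 0 ∧ z ^ ((p ^ n - 1) / k) = x - y

namespace SimpleGraph

variable {F : Type*} [Field F] {G : SimpleGraph F} {H : Subgroup Fˣ}

def affineIso (hG : ∀ x y, G.Adj x y ↔ ∃ u ∈ H, (u : F) = x - y) (a : Fˣ) (ha : a ∈ H) (b : F) :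
    G ≃g G where
  toEquiv := (Units.mulLeft a).trans (Equiv.addRight b)
  map_rel_iff' {x y} := by
    have hsub : a * x + b - (a * y + b) = a * (x - y) := by ring
    simp only [Equiv.trans_apply, Units.mulLeft_apply, Equiv.coe_addRight, hG, hsub]
    constructor
    · rintro ⟨u, hu, hux⟩
      exact ⟨a⁻¹ * u, H.mul_mem (H.inv_mem ha) hu, by simp [hux]⟩
    · rintro ⟨u, hu, hux⟩
      exact ⟨a * u, H.mul_mem ha hu, by simp [hux]⟩

theorem affineIso_apply (hG : ∀ x y, G.Adj x y ↔ ∃ u ∈ H, (u : F) = x - y) (a : Fˣ) (ha : a ∈ H)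
    (b t : F) : affineIso hG a ha b t = a * t + b :=
  rfl

theorem exists_iso_map_arc_of_adj_iff (hG : ∀ x y, G.Adj x y ↔ ∃ u ∈ H, (u : F) = x - y)
    {x y x' y' : F} (hxy : G.Adj x y) (hxy' : G.Adj x' y') :
    ∃ f : G ≃g G, f x = x' ∧ f y = y' := by
  obtain ⟨u, hu, hux⟩ := (hG x y).mp hxy
  obtain ⟨u', hu', hux'⟩ := (hG x' y').mp hxy'
  refine ⟨affineIso hG (u' / u) (H.div_mem hu' hu) (x' - (u' / u : Fˣ) * x), ?_, ?_⟩
  · simp only [affineIso_apply]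
    ring
  · have hy : y = x - u := by rw [hux]; ring
    have hy' : y' = x' - u' := by rw [hux']; ring
    simp only [affineIso_apply, hy, hy', Units.val_div_eq_div_val]
    field_simp
    ring

end SimpleGraph

section SignedPowers

variable (F : Type*) [Field F]

def signedPowers (d : ℕ) : Subgroup Fˣ :=
  ((powMonoidHom d).coprod (Units.map (Int.castRingHom F).toMonoidHom)).range

variable {F}

theorem mem_signedPowers {d : ℕ} {u : Fˣ} :
    u ∈ signedPowers F d ↔ ∃ z : Fˣ, z ^ d = u ∨ z ^ d = -u := by
  simp only [signedPowers, MonoidHom.mem_range, Prod.exists, MonoidHom.coprod_apply,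
    powMonoidHom_apply]
  constructor
  · rintro ⟨z, ε, rfl⟩
    refine ⟨z, ?_⟩
    rcases Int.units_eq_one_or ε with rfl | rfl <;> simp
  · rintro ⟨z, hz | hz⟩
    · exact ⟨z, 1, by simp [hz]⟩
    · exact ⟨z, -1, by simp [hz]⟩

end SignedPowers

theorem gpaley_adj_iff (p : ℕ) [Fact p.Prime] (n k : ℕ) (x y : GaloisField p n) :
    (gpaley p n k).Adj x y ↔
      ∃ u ∈ signedPowers (GaloisField p n) ((p ^ n - 1) / k), (u : GaloisField p n) = x - y := by
  simp only [gpaley, SimpleGraph.fromRel_adj, mem_signedPowers]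
  constructor
  · rintro ⟨hne, hz⟩
    refine ⟨Units.mk0 _ (sub_ne_zero.mpr hne), ?_, rfl⟩
    rcases hz with ⟨z, hz, hzx⟩ | ⟨z, hz, hzx⟩
    · exact ⟨Units.mk0 z hz, Or.inl (Units.ext (by simp [hzx]))⟩
    · exact ⟨Units.mk0 z hz, Or.inr (Units.ext (by simp [hzx]))⟩
  · rintro ⟨u, ⟨z, hz⟩, hux⟩
    refine ⟨sub_ne_zero.mp (hux ▸ u.ne_zero), ?_⟩
    have hzd : (z : GaloisField p n) ^ ((p ^ n - 1) / k) = x - y ∨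
        (z : GaloisField p n) ^ ((p ^ n - 1) / k) = y - x := by
      rw [← Units.val_pow_eq_pow_val]
      rcases hz with hz | hz
      · exact Or.inl (by rw [hz, hux])
      · exact Or.inr (by rw [hz, Units.val_neg, hux, neg_sub])
    exact hzd.imp (⟨z, z.ne_zero, ·⟩) (⟨z, z.ne_zero, ·⟩)

theorem gpaley_arcTransitive_general (p n k : ℕ) [Fact p.Prime] :
    ∀ x y x' y' : GaloisField p n,
      (gpaley p n k).Adj x y → (gpaley p n k).Adj x' y' →
        ∃ f : gpaley p n k ≃g gpaley p n k, f x = x' ∧ f y = y' :=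
  fun _ _ _ _ => SimpleGraph.exists_iso_map_arc_of_adj_iff (gpaley_adj_iff p n k)

/-- For `k ∣ p^n - 1` (with `k` even if `p` is odd), the
generalised Paley graph `GPaley(p^n, k)` is arc-transitive: any arc can be
mapped to any other arc by an automorphism. -/
theorem gpaley_arcTransitive (p n k : ℕ) [Fact p.Prime] (hn : 0 < n)
    (hk : k ∣ p ^ n - 1) (heven : Odd p → Even k) :
    ∀ x y x' y' : GaloisField p n,
      (gpaley p n k).Adj x y → (gpaley p n k).Adj x' y' →
        ∃ f : gpaley p n k ≃g gpaley p n k, f x = x' ∧ f y = y' :=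
  gpaley_arcTransitive_general p n k
end

section
/- Let p be a prime, n a positive integer, and k a primitive divisor of p^n − 1 such that k is even if p is odd. Suppose k = b·c with b > 1, b dividing n, and c a primitive divisor of p^{n/b} − 1, and write d = (p^n − 1)/k. Let ξ be a generator of GF(p^n)^*, let C = ⟨ξ^{(p^n−1)/c}⟩ be the subgroup of GF(p^n)^* of order c, and for 1 ≤ i ≤ b let A_i be the additive subgroup of GF(p^n) generated by the coset C·ξ^{d·i}. Then the additive group of GF(p^n) is the internal direct sum of A₁, …, A_b; in particular every element of GF(p^n) is uniquely a sum a₁ + … + a_b with a_i ∈ A_i. -/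
/-!
Let `α = ξ ^ ((p ^ n - 1) / k)` and `ζ = ξ ^ ((p ^ n - 1) / c)`, of orders `k` and `c`. The
additive group generated by the powers of `ζ` is the subfield `K = 𝔽_p(ζ)`, so
`A i = K · α ^ (i + 1)`. Over `𝔽_q`, an element whose order is a primitive divisor of
`q ^ m - 1` has degree exactly `m`, because its minimal polynomial divides `X ^ (q ^ a) - X` iff
its degree divides `a`. Hence `[K : 𝔽_p] = n / b`, so `[GF(p^n) : K] = b`, and `α` also has
degree `b` over `K` (its order is a primitive divisor of `(p ^ (n / b)) ^ b - 1`). Therefore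
`α, α², …, α ^ b` is a `K`-basis of `GF(p^n)`, and the decomposition is the coordinate
decomposition in this basis.
-/

open Module Polynomial IntermediateField

theorem IsPrimitiveDivisor.pow_left {q m b k : ℕ} (h : IsPrimitiveDivisor q (m * b) k)
    (hm : 0 < m) : IsPrimitiveDivisor (q ^ m) b k := by
  refine ⟨by rw [← pow_mul]; exact h.1, fun a ha hab => ?_⟩
  rw [← pow_mul]
  exact h.2 (m * a) (Nat.one_le_iff_ne_zero.2 (by positivity)) (Nat.mul_lt_mul_of_pos_left hab hm)

theorem pow_eq_self_iff_orderOf_dvd {G₀ : Type*} [GroupWithZero G₀] {x : G₀} (hx : x ≠ 0)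
    {N : ℕ} (hN : N ≠ 0) : x ^ N = x ↔ orderOf x ∣ N - 1 := by
  rw [orderOf_dvd_iff_pow_eq_one, ← mul_eq_right₀ hx, ← pow_succ,
    Nat.sub_add_cancel (Nat.one_le_iff_ne_zero.2 hN)]

theorem orderOf_pow_div_of_zpowers_eq_top {F : Type*} [Field F] [Finite F] {ξ : Fˣ}
    (hξ : Subgroup.zpowers ξ = ⊤) {k : ℕ} (hk : k ∣ Nat.card F - 1) :
    orderOf ((ξ : F) ^ ((Nat.card F - 1) / k)) = k := by
  have hξord : orderOf (ξ : F) = Nat.card F - 1 := by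
    rw [orderOf_units, orderOf_eq_card_of_forall_mem_zpowers (fun u => hξ ▸ Subgroup.mem_top u),
      Nat.card_units]
  rw [← hξord] at hk ⊢
  exact orderOf_pow_orderOf_div (by rw [orderOf_units]; exact (orderOf_pos ξ).ne') hk

section minpoly

variable {k L : Type*} [Field k] [Finite k] [Field L] [Algebra k L] {x : L}

theorem natDegree_minpoly_dvd_iff (hx : IsIntegral k x) (hx0 : x ≠ 0) {a : ℕ} :
    (minpoly k x).natDegree ∣ a ↔ orderOf x ∣ Nat.card k ^ a - 1 := by
  rw [(minpoly.irreducible hx).natDegree_dvd_iff_dvd_X_pow_card_pow_sub_X, minpoly.dvd_iff,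
    map_sub, map_pow, aeval_X, sub_eq_zero,
    pow_eq_self_iff_orderOf_dvd hx0 (pow_ne_zero _ Nat.card_pos.ne')]

theorem natDegree_minpoly_eq_of_isPrimitiveDivisor (hx : IsIntegral k x) (hx0 : x ≠ 0) {m : ℕ}
    (hm : 0 < m) (h : IsPrimitiveDivisor (Nat.card k) m (orderOf x)) :
    (minpoly k x).natDegree = m := by
  have hdvd : (minpoly k x).natDegree ∣ m := (natDegree_minpoly_dvd_iff hx hx0).2 h.1
  refine (Nat.le_of_dvd hm hdvd).antisymm (not_lt.1 fun hlt => ?_)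
  exact h.2 _ (minpoly.natDegree_pos hx) hlt ((natDegree_minpoly_dvd_iff hx hx0).1 dvd_rfl)

end minpoly

theorem linearIndependent_pow_succ {K L : Type*} [Field K] [Field L] [Algebra K L] {x : L}
    (hx : x ≠ 0) {d : ℕ} (hd : (minpoly K x).natDegree = d) :
    LinearIndependent K fun i : Fin d => x ^ ((i : ℕ) + 1) := by
  subst hd
  have hmul : (LinearMap.mulLeft K x).ker = ⊥ :=
    LinearMap.ker_eq_bot.2 (mul_right_injective₀ hx)
  simpa only [Function.comp_def, LinearMap.mulLeft_apply, ← pow_succ'] using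
    (linearIndependent_pow x).map' _ hmul

theorem exists_basis_pow_succ_of_isPrimitiveDivisor {k L : Type*} [Field k] [Finite k] [Field L]
    [Algebra k L] [FiniteDimensional k L] {ζ α : L} (hζ : ζ ≠ 0) (hα : α ≠ 0) {m b : ℕ}
    (hm : 0 < m) (hL : finrank k L = m * b)
    (hζm : IsPrimitiveDivisor (Nat.card k) m (orderOf ζ))
    (hαn : IsPrimitiveDivisor (Nat.card k) (m * b) (orderOf α)) :
    ∃ v : Basis (Fin b) k⟮ζ⟯ L, ∀ i, v i = α ^ ((i : ℕ) + 1) := by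
  have hb : 0 < b := Nat.pos_of_mul_pos_left (hL ▸ finrank_pos)
  have hK : finrank k k⟮ζ⟯ = m := by
    rw [adjoin.finrank (.of_finite k ζ)]
    exact natDegree_minpoly_eq_of_isPrimitiveDivisor (.of_finite k ζ) hζ hm hζm
  have : Finite k⟮ζ⟯ := Module.finite_of_finite k
  have hαdeg : (minpoly k⟮ζ⟯ α).natDegree = b :=
    natDegree_minpoly_eq_of_isPrimitiveDivisor (.of_finite _ α) hα hb (by
      rw [Module.natCard_eq_pow_finrank (K := k), hK]
      exact hαn.pow_left hm)
  have hKL : finrank k⟮ζ⟯ L = b := by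
    have := Module.finrank_mul_finrank k k⟮ζ⟯ L
    rw [hK, hL] at this
    exact Nat.eq_of_mul_eq_mul_left hm this
  have : NeZero b := ⟨hb.ne'⟩
  exact ⟨basisOfLinearIndependentOfCardEqFinrank (linearIndependent_pow_succ hα hαdeg)
    (by rw [Fintype.card_fin, hKL]), congrFun (coe_basisOfLinearIndependentOfCardEqFinrank _ _)⟩

theorem Module.Basis.existsUnique_sum_mem_span_singleton {ι R M : Type*} [Fintype ι]
    [Semiring R] [AddCommMonoid M] [Module R M] (v : Basis ι R M) (x : M) :
    ∃! f : ι → M, (∀ i, f i ∈ R ∙ v i) ∧ ∑ i, f i = x := by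
  refine ⟨fun i => v.repr x i • v i,
    ⟨fun i => Submodule.smul_mem _ _ (Submodule.mem_span_singleton_self _), v.sum_repr x⟩, ?_⟩
  rintro f ⟨hf, rfl⟩
  choose a ha using fun i => Submodule.mem_span_singleton.1 (hf i)
  funext i
  simp_rw [← ha, v.repr_sum_self]

theorem Submodule.span_zmod_eq_addSubgroupClosure {n : ℕ} {M : Type*} [AddCommGroup M]
    [Module (ZMod n) M] (s : Set M) :
    (span (ZMod n) s).toAddSubgroup = AddSubgroup.closure s :=
  le_antisymm
    (span_le (p := AddSubgroup.toZModSubmodule n (AddSubgroup.closure s)).2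
      AddSubgroup.subset_closure)
    ((AddSubgroup.closure_le _).2 subset_span)

theorem Algebra.adjoin_singleton_zmod_toAddSubgroup {n : ℕ} {A : Type*} [Ring A]
    [Algebra (ZMod n) A] (x : A) :
    (Subalgebra.toSubmodule (Algebra.adjoin (ZMod n) {x})).toAddSubgroup =
      AddSubgroup.closure (Set.range (x ^ · : ℕ → A)) := by
  rw [Algebra.adjoin_eq_span, ← Submonoid.powers_eq_closure, Submonoid.coe_powers,
    Submodule.span_zmod_eq_addSubgroupClosure]

theorem closure_image_mul_range_pow_eq_span_singleton {p : ℕ} [Fact p.Prime] {L : Type*}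
    [Field L] [Algebra (ZMod p) L] {x : L} (hx : IsIntegral (ZMod p) x) (y : L) :
    AddSubgroup.closure ((· * y) '' Set.range (x ^ · : ℕ → L)) =
      ((ZMod p)⟮x⟯ ∙ y).toAddSubgroup := by
  ext z
  rw [← AddMonoidHom.coe_mulRight, ← AddMonoidHom.map_closure,
    ← Algebra.adjoin_singleton_zmod_toAddSubgroup (n := p),
    ← adjoin_simple_toSubalgebra_of_isAlgebraic hx.isAlgebraic]
  simp only [AddSubgroup.mem_map, Submodule.mem_toAddSubgroup, Submodule.mem_span_singleton]
  exact ⟨fun ⟨w, hw, hwz⟩ => ⟨⟨w, hw⟩, hwz⟩, fun ⟨a, ha⟩ => ⟨a, a.2, ha⟩⟩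

theorem gpaley_internal_direct_sum_general (p n k b c : ℕ) [Fact p.Prime]
    (hn : 0 < n) (hk : IsPrimitiveDivisor p n k) (hbn : b ∣ n)
    (hc : IsPrimitiveDivisor p (n / b) c)
    (ξ : (GaloisField p n)ˣ) (hξ : Subgroup.zpowers ξ = ⊤)
    (A : Fin b → AddSubgroup (GaloisField p n))
    (hA : ∀ i : Fin b, A i = AddSubgroup.closure
        ((fun x => x * (ξ : GaloisField p n) ^ ((p ^ n - 1) / k * (i.val + 1))) ''
          Set.range fun m : ℕ => (ξ : GaloisField p n) ^ ((p ^ n - 1) / c * m))) :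
    ∀ x : GaloisField p n,
      ∃! f : Fin b → GaloisField p n, (∀ i, f i ∈ A i) ∧ ∑ i, f i = x := by
  have hnb : n / b * b = n := Nat.div_mul_cancel hbn
  have hm : 0 < n / b := Nat.div_pos (Nat.le_of_dvd hn hbn) (Nat.pos_of_dvd_of_pos hbn hn)
  have hF : Nat.card (GaloisField p n) = p ^ n := GaloisField.card p n hn.ne'
  set α := (ξ : GaloisField p n) ^ ((p ^ n - 1) / k)
  set ζ := (ξ : GaloisField p n) ^ ((p ^ n - 1) / c)
  have hαord : orderOf α = k := by
    simpa only [hF] using orderOf_pow_div_of_zpowers_eq_top hξ (hF ▸ hk.1)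
  have hζord : orderOf ζ = c := by
    have hcn : c ∣ p ^ n - 1 :=
      hc.1.trans (Nat.pow_sub_one_dvd_pow_sub_one p (Nat.div_dvd_of_dvd hbn))
    simpa only [hF] using orderOf_pow_div_of_zpowers_eq_top hξ (hF ▸ hcn)
  obtain ⟨v, hv⟩ := exists_basis_pow_succ_of_isPrimitiveDivisor (k := ZMod p)
    (pow_ne_zero _ ξ.ne_zero) (pow_ne_zero _ ξ.ne_zero) hm
    (by rw [GaloisField.finrank p hn.ne', hnb]) (by rwa [Nat.card_zmod, hζord])
    (by rwa [Nat.card_zmod, hαord, hnb])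
  have hAv : A = fun i => ((ZMod p)⟮ζ⟯ ∙ v i).toAddSubgroup := by
    funext i
    rw [hA i, hv i]
    simp only [pow_mul]
    exact closure_image_mul_range_pow_eq_span_singleton (.of_finite (ZMod p) ζ) _
  subst hAv
  exact v.existsUnique_sum_mem_span_singleton

/-- With `k = b * c` a primitive divisor of `p^n - 1` (even if `p`
is odd), `b > 1`, `b ∣ n`, `c` a primitive divisor of `p^(n/b) - 1`,
`d = (p^n - 1)/k`, `ξ` a generator of `GF(p^n)ˣ`, `C = ⟨ξ^((p^n-1)/c)⟩`, and
`A_i` the additive subgroup generated by the coset `C·ξ^(d·i)` for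
`1 ≤ i ≤ b`, the additive group of `GF(p^n)` is the internal direct sum of
`A₁, …, A_b`: every element is uniquely a sum `a₁ + … + a_b` with `a_i ∈ A_i`. -/
theorem gpaley_internal_direct_sum (p n k b c : ℕ) [Fact p.Prime]
    (hn : 0 < n) (hk : IsPrimitiveDivisor p n k) (heven : Odd p → Even k)
    (hkbc : k = b * c) (hb : 1 < b) (hbn : b ∣ n)
    (hc : IsPrimitiveDivisor p (n / b) c)
    (ξ : (GaloisField p n)ˣ) (hξ : Subgroup.zpowers ξ = ⊤)
    (A : Fin b → AddSubgroup (GaloisField p n))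
    (hA : ∀ i : Fin b, A i = AddSubgroup.closure
        ((fun x => x * (ξ : GaloisField p n) ^ ((p ^ n - 1) / k * (i.val + 1))) ''
          Set.range fun m : ℕ => (ξ : GaloisField p n) ^ ((p ^ n - 1) / c * m))) :
    ∀ x : GaloisField p n,
      ∃! f : Fin b → GaloisField p n, (∀ i, f i ∈ A i) ∧ ∑ i, f i = x :=
  gpaley_internal_direct_sum_general p n k b c hn hk hbn hc ξ hξ A hA
end
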